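/- With C defined as the previous-occurrence array of the document array DA, for any interval [sp..ep] the number of positions i ∈ [sp..ep] with C[i] < sp equals the number of distinct document identifiers appearing in DA[sp..ep]. -/

import Mathlib

/-! A position `i` of the window `[sp..ep]` has `C i < sp` exactly when no earlier position of the
window carries the document `DA i`, i.e. when `i` is the first occurrence of `DA i` in the window.
Sending each first occurrence to its document is a bijection onto the documents of the window. -/

open Finset

theorem card_filter_forall_lt_ne_eq_card_image {α β : Type*} [LinearOrder α] [DecidableEq β]
    (s : Finset α) (f : α → β) :
    (s.filter fun i => ∀ j ∈ s, j < i → f j ≠ f i).card = (s.image f).card := by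
  set first := s.filter fun i => ∀ j ∈ s, j < i → f j ≠ f i
  have h_inj : Set.InjOn f first := by
    intro a ha b hb hab
    simp only [first, coe_filter, Set.mem_ofPred_eq] at ha hb
    by_contra hne
    rcases lt_or_gt_of_ne hne with h | h
    · exact hb.2 a ha.1 h hab
    · exact ha.2 b hb.1 h hab.symm
  have h_image : first.image f = s.image f := by
    refine Subset.antisymm (image_subset_image (filter_subset _ _)) ?_
    intro v hv
    obtain ⟨k, hk, rfl⟩ := mem_image.mp hv
    have hne : (s.filter fun j => f j = f k).Nonempty := ⟨k, mem_filter.mpr ⟨hk, rfl⟩⟩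
    obtain ⟨hmin_mem, hmin_val⟩ := mem_filter.mp (min'_mem _ hne)
    refine mem_image.mpr ⟨_, mem_filter.mpr ⟨hmin_mem, fun j hj hlt hfj => ?_⟩, hmin_val⟩
    exact (min'_le _ j (mem_filter.mpr ⟨hj, hfj.trans hmin_val⟩)).not_gt hlt
  rw [← h_image, card_image_of_injOn h_inj]

def IsPrevOccurrence (DA : ℕ → ℕ) (c i : ℕ) : Prop :=
  (c = 0 ∧ ∀ j, 1 ≤ j → j < i → DA j ≠ DA i) ∨
    (1 ≤ c ∧ c < i ∧ DA c = DA i ∧ ∀ j, c < j → j < i → DA j ≠ DA i)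

theorem IsPrevOccurrence.lt_iff_forall_ne {DA : ℕ → ℕ} {c i sp : ℕ}
    (h : IsPrevOccurrence DA c i) (hsp : 1 ≤ sp) :
    c < sp ↔ ∀ j, sp ≤ j → j < i → DA j ≠ DA i := by
  rcases h with ⟨rfl, h_none⟩ | ⟨-, hci, hc_eq, h_between⟩
  · exact ⟨fun _ j hj => h_none j (hsp.trans hj), fun _ => hsp⟩
  · refine ⟨fun hc j hj => h_between j (hc.trans_le hj), fun h_first => ?_⟩
    by_contra! hc
    exact h_first c hc hci hc_eq

/-- With `C` the previous-occurrence array of the document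
array `DA` (`C i` is the largest `j < i` with `DA j = DA i`, or `0` if none),
for any interval `[sp..ep]` the number of positions `i ∈ [sp..ep]` with
`C i < sp` equals the number of distinct document identifiers appearing in
`DA[sp..ep]`. -/
theorem card_C_lt_eq_card_distinct (n : ℕ) (DA C : ℕ → ℕ) (sp ep : ℕ)
    (hsp : 1 ≤ sp) (hep : ep ≤ n)
    (hC : ∀ i, 1 ≤ i → i ≤ n →
      (C i = 0 ∧ ∀ j, 1 ≤ j → j < i → DA j ≠ DA i) ∨
      (1 ≤ C i ∧ C i < i ∧ DA (C i) = DA i ∧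
        ∀ j, C i < j → j < i → DA j ≠ DA i)) :
    ((Finset.Icc sp ep).filter (fun i => C i < sp)).card
      = ((Finset.Icc sp ep).image DA).card := by
  rw [← card_filter_forall_lt_ne_eq_card_image]
  congr 1
  refine filter_congr fun i hi => ?_
  obtain ⟨hspi, hie⟩ := mem_Icc.mp hi
  have h_prev : IsPrevOccurrence DA (C i) i := hC i (hsp.trans hspi) (hie.trans hep)
  rw [h_prev.lt_iff_forall_ne hsp]
  exact forall_congr' fun j => ⟨fun h hj => h (mem_Icc.mp hj).1,
    fun h hj hji => h (mem_Icc.mpr ⟨hj, hji.le.trans hie⟩) hji⟩
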